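/- Let F and G be distributions with continuous quantile functions. Then Shift_-^{CD}(F,G) = 0 if and only if F is larger than G in the weak stochastic order, i.e., max{F^{-1}(τ) − G^{-1}(ξ), F^{-1}(1−τ) − G^{-1}(1−ξ)} ≥ 0 for all 0.5 < τ, ξ < 1. -/

import Mathlib

open MeasureTheory
open scoped ENNReal

/-- `Shift₊^{CD}` component, as a lower Lebesgue integral. -/
noncomputable def cdShiftPlusL (qF qG : ℝ → ℝ) : ℝ≥0∞ :=
  (1 / 2 : ℝ≥0∞) * ∫⁻ β in Set.Ioo (0:ℝ) 1, ∫⁻ α in Set.Ioo (0:ℝ) 1,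
    (ENNReal.ofReal (max (min (qF ((1 + α) / 2) - qG ((1 + β) / 2))
                              (qF ((1 - α) / 2) - qG ((1 - β) / 2))) 0) +
     ENNReal.ofReal (max (qF ((1 - α) / 2) - qG ((1 + β) / 2)) 0))

/-!
By monotonicity of the quantile functions, the second summand of the integrand vanishes wherever
the first does. So the integrand vanishes on `(0,1)²` iff
`min {F⁻¹((1+α)/2) − G⁻¹((1+β)/2), F⁻¹((1−α)/2) − G⁻¹((1−β)/2)} ≤ 0` there. By continuity,
a point where this minimum is positive yields a whole rectangle where it is, hence a positive
integral. Substituting `ξ = (1+α)/2`, `τ = (1+β)/2` turns the pointwise condition for the pair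
`(G, F)` into the weak stochastic order.
-/

open Set Filter Topology

theorem mul_measure_le_setLIntegral {X : Type*} [MeasurableSpace X] {μ : Measure X}
    {f : X → ℝ≥0∞} {s t : Set X} {c : ℝ≥0∞} (ht : MeasurableSet t) (hts : t ⊆ s)
    (hf : ∀ x ∈ t, c ≤ f x) :
    c * μ t ≤ ∫⁻ x in s, f x ∂μ :=
  calc c * μ t = ∫⁻ _ in t, c ∂μ := (setLIntegral_const t c).symm
    _ ≤ ∫⁻ x in t, f x ∂μ := setLIntegral_mono' ht hf
    _ ≤ ∫⁻ x in s, f x ∂μ := lintegral_mono_set hts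

theorem setLIntegral_setLIntegral_pos_of_eventually_le {X Y : Type*} [TopologicalSpace X]
    [MeasurableSpace X] [OpensMeasurableSpace X] [TopologicalSpace Y] [MeasurableSpace Y]
    [OpensMeasurableSpace Y] {μ : Measure X} {ν : Measure Y}
    [μ.IsOpenPosMeasure] [ν.IsOpenPosMeasure] {f : X → Y → ℝ≥0∞} {s : Set X} {t : Set Y}
    {x₀ : X} {y₀ : Y} {c : ℝ≥0∞} (hs : s ∈ 𝓝 x₀) (ht : t ∈ 𝓝 y₀) (hc : c ≠ 0)
    (hf : ∀ᶠ p in 𝓝 (x₀, y₀), c ≤ f p.1 p.2) :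
    0 < ∫⁻ x in s, ∫⁻ y in t, f x y ∂ν ∂μ := by
  obtain ⟨u, v, hu, hx₀, hv, hy₀, huv⟩ := mem_nhds_prod_iff'.1 (hf.and (prod_mem_nhds hs ht))
  have hinner : ∀ x ∈ u, c * ν v ≤ ∫⁻ y in t, f x y ∂ν := fun x hx =>
    mul_measure_le_setLIntegral hv.measurableSet (fun y hy => (huv (mk_mem_prod hx hy)).2.2)
      (fun y hy => (huv (mk_mem_prod hx hy)).1)
  calc 0 < c * ν v * μ u :=
        ENNReal.mul_pos (mul_ne_zero hc (hv.measure_ne_zero ν ⟨y₀, hy₀⟩))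
          (hu.measure_ne_zero μ ⟨x₀, hx₀⟩)
    _ ≤ _ := mul_measure_le_setLIntegral hu.measurableSet
        (fun x hx => (huv (mk_mem_prod hx hy₀)).2.1) hinner

namespace CDShift

noncomputable def integrand (qF qG : ℝ → ℝ) (α β : ℝ) : ℝ≥0∞ :=
  ENNReal.ofReal (max (min (qF ((1 + α) / 2) - qG ((1 + β) / 2))
                           (qF ((1 - α) / 2) - qG ((1 - β) / 2))) 0) +
  ENNReal.ofReal (max (qF ((1 - α) / 2) - qG ((1 + β) / 2)) 0)

noncomputable def centralGap (qF qG : ℝ → ℝ) (α β : ℝ) : ℝ :=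
  min (qF ((1 + α) / 2) - qG ((1 + β) / 2)) (qF ((1 - α) / 2) - qG ((1 - β) / 2))

theorem cdShiftPlusL_eq (qF qG : ℝ → ℝ) :
    cdShiftPlusL qF qG =
      1 / 2 * ∫⁻ β in Ioo (0:ℝ) 1, ∫⁻ α in Ioo (0:ℝ) 1, integrand qF qG α β :=
  rfl

theorem one_add_div_two_mem_Ioo {α : ℝ} (hα : α ∈ Ioo (0:ℝ) 1) : (1 + α) / 2 ∈ Ioo (0:ℝ) 1 :=
  ⟨by linarith [hα.1], by linarith [hα.2]⟩

theorem one_sub_div_two_mem_Ioo {α : ℝ} (hα : α ∈ Ioo (0:ℝ) 1) : (1 - α) / 2 ∈ Ioo (0:ℝ) 1 :=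
  ⟨by linarith [hα.2], by linarith [hα.1]⟩

variable {qF qG : ℝ → ℝ}

theorem integrand_eq_zero (hF : MonotoneOn qF (Ioo 0 1)) (hG : MonotoneOn qG (Ioo 0 1))
    {α β : ℝ} (hα : α ∈ Ioo (0:ℝ) 1) (hβ : β ∈ Ioo (0:ℝ) 1) (h : centralGap qF qG α β ≤ 0) :
    integrand qF qG α β = 0 := by
  rw [centralGap] at h
  have hcross : qF ((1 - α) / 2) - qG ((1 + β) / 2) ≤ 0 := by
    rcases min_le_iff.1 h with h | h
    · have := hF (one_sub_div_two_mem_Ioo hα) (one_add_div_two_mem_Ioo hα) (by linarith [hα.1])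
      linarith
    · have := hG (one_sub_div_two_mem_Ioo hβ) (one_add_div_two_mem_Ioo hβ) (by linarith [hβ.1])
      linarith
  rw [integrand, max_eq_right h, max_eq_right hcross, ENNReal.ofReal_zero, add_zero]

theorem cdShiftPlusL_eq_zero_of_centralGap_nonpos (hF : MonotoneOn qF (Ioo 0 1))
    (hG : MonotoneOn qG (Ioo 0 1))
    (h : ∀ α ∈ Ioo (0:ℝ) 1, ∀ β ∈ Ioo (0:ℝ) 1, centralGap qF qG α β ≤ 0) :
    cdShiftPlusL qF qG = 0 := by
  rw [cdShiftPlusL_eq, setLIntegral_eq_zero measurableSet_Ioo fun β hβ =>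
    setLIntegral_eq_zero measurableSet_Ioo fun α hα => integrand_eq_zero hF hG hα hβ (h α hα β hβ),
    mul_zero]

theorem continuousAt_centralGap (hFc : ContinuousOn qF (Ioo 0 1))
    (hGc : ContinuousOn qG (Ioo 0 1)) {α β : ℝ} (hα : α ∈ Ioo (0:ℝ) 1) (hβ : β ∈ Ioo (0:ℝ) 1) :
    ContinuousAt (fun p : ℝ × ℝ => centralGap qF qG p.2 p.1) (β, α) := by
  have hFhi := hFc.continuousAt (isOpen_Ioo.mem_nhds (one_add_div_two_mem_Ioo hα))
  have hFlo := hFc.continuousAt (isOpen_Ioo.mem_nhds (one_sub_div_two_mem_Ioo hα))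
  have hGhi := hGc.continuousAt (isOpen_Ioo.mem_nhds (one_add_div_two_mem_Ioo hβ))
  have hGlo := hGc.continuousAt (isOpen_Ioo.mem_nhds (one_sub_div_two_mem_Ioo hβ))
  have hα₁ : ContinuousAt (fun p : ℝ × ℝ => (1 + p.2) / 2) (β, α) := by fun_prop
  have hα₂ : ContinuousAt (fun p : ℝ × ℝ => (1 - p.2) / 2) (β, α) := by fun_prop
  have hβ₁ : ContinuousAt (fun p : ℝ × ℝ => (1 + p.1) / 2) (β, α) := by fun_prop
  have hβ₂ : ContinuousAt (fun p : ℝ × ℝ => (1 - p.1) / 2) (β, α) := by fun_prop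
  exact ((hFhi.comp_of_eq hα₁ rfl).sub (hGhi.comp_of_eq hβ₁ rfl)).min
    ((hFlo.comp_of_eq hα₂ rfl).sub (hGlo.comp_of_eq hβ₂ rfl))

theorem cdShiftPlusL_pos_of_centralGap_pos (hFc : ContinuousOn qF (Ioo 0 1))
    (hGc : ContinuousOn qG (Ioo 0 1)) {α β : ℝ} (hα : α ∈ Ioo (0:ℝ) 1) (hβ : β ∈ Ioo (0:ℝ) 1)
    (hpos : 0 < centralGap qF qG α β) :
    0 < cdShiftPlusL qF qG := by
  have hev : ∀ᶠ p in 𝓝 (β, α),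
      ENNReal.ofReal (centralGap qF qG α β / 2) ≤ integrand qF qG p.2 p.1 := by
    filter_upwards [(continuousAt_centralGap hFc hGc hα hβ).eventually
      (lt_mem_nhds (half_lt_self hpos))] with p hp
    exact (ENNReal.ofReal_le_ofReal (hp.le.trans (le_max_left _ _))).trans le_self_add
  rw [cdShiftPlusL_eq]
  exact ENNReal.mul_pos (by norm_num) (setLIntegral_setLIntegral_pos_of_eventually_le
    (isOpen_Ioo.mem_nhds hβ) (isOpen_Ioo.mem_nhds hα)
    (ENNReal.ofReal_pos.2 (half_pos hpos)).ne' hev).ne'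

theorem cdShiftPlusL_eq_zero_iff (hF : MonotoneOn qF (Ioo 0 1)) (hG : MonotoneOn qG (Ioo 0 1))
    (hFc : ContinuousOn qF (Ioo 0 1)) (hGc : ContinuousOn qG (Ioo 0 1)) :
    cdShiftPlusL qF qG = 0 ↔ ∀ α ∈ Ioo (0:ℝ) 1, ∀ β ∈ Ioo (0:ℝ) 1, centralGap qF qG α β ≤ 0 := by
  refine ⟨fun h0 α hα β hβ => ?_, cdShiftPlusL_eq_zero_of_centralGap_nonpos hF hG⟩
  by_contra! hpos
  exact (cdShiftPlusL_pos_of_centralGap_pos hFc hGc hα hβ hpos).ne' h0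

theorem weakStochastic_iff_centralGap_nonpos :
    (∀ τ ξ : ℝ, 1 / 2 < τ → τ < 1 → 1 / 2 < ξ → ξ < 1 →
        0 ≤ max (qF τ - qG ξ) (qF (1 - τ) - qG (1 - ξ))) ↔
      ∀ α ∈ Ioo (0:ℝ) 1, ∀ β ∈ Ioo (0:ℝ) 1, centralGap qG qF α β ≤ 0 := by
  have hgap : ∀ α β : ℝ, centralGap qG qF α β =
      -max (qF ((1 + β) / 2) - qG ((1 + α) / 2)) (qF (1 - (1 + β) / 2) - qG (1 - (1 + α) / 2)) :=
    fun α β => by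
      rw [centralGap, ← min_neg_neg, neg_sub, neg_sub, show 1 - (1 + α) / 2 = (1 - α) / 2 by ring,
        show 1 - (1 + β) / 2 = (1 - β) / 2 by ring]
  constructor
  · intro h α hα β hβ
    rw [hgap, neg_nonpos]
    exact h _ _ (by linarith [hβ.1]) (by linarith [hβ.2]) (by linarith [hα.1]) (by linarith [hα.2])
  · intro h τ ξ hτ hτ₁ hξ hξ₁
    have := h (2 * ξ - 1) ⟨by linarith, by linarith⟩ (2 * τ - 1) ⟨by linarith, by linarith⟩
    rwa [hgap, neg_nonpos, show (1 + (2 * ξ - 1)) / 2 = ξ by ring,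
      show (1 + (2 * τ - 1)) / 2 = τ by ring] at this

end CDShift

open CDShift in
/-- For distributions with continuous quantile functions,
`Shift₋^{CD}(F,G) = Shift₊^{CD}(G,F) = 0` iff `F` is larger than `G` in the
weak stochastic order. -/
theorem cd_shift_minus_zero_iff_weak_stochastic (qF qG : ℝ → ℝ)
    (hF : MonotoneOn qF (Set.Ioo 0 1)) (hG : MonotoneOn qG (Set.Ioo 0 1))
    (hFc : ContinuousOn qF (Set.Ioo 0 1)) (hGc : ContinuousOn qG (Set.Ioo 0 1)) :
    cdShiftPlusL qG qF = 0 ↔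
      (∀ τ ξ : ℝ, 1 / 2 < τ → τ < 1 → 1 / 2 < ξ → ξ < 1 →
        0 ≤ max (qF τ - qG ξ) (qF (1 - τ) - qG (1 - ξ))) := by
  rw [cdShiftPlusL_eq_zero_iff hG hF hGc hFc, weakStochastic_iff_centralGap_nonpos]
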